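/- arXiv:1909.01232 — 6 statements merged into one kernel-verified Lean document; each statement's English description precedes it below -/
import Mathlib

section
/- If M →_δ N in system F, then M →⁺_{ϱβ} N: every δ-reduction step can be decomposed as one ϱ-step followed by one or more β-steps. Concretely, for the implication case: M(C₁⊃C₂)⟨λx:A.λz:C₁.P, λy:B.λz:C₁.Q⟩ →_ϱ λw:C₁. M C₂ ⟨λx:A.(λz:C₁.P)w, λy:B.(λz:C₁.Q)w⟩ →²_β λz:C₁. M C₂ ⟨λx:A.P, λy:B.Q⟩. -/
inductive Ty : Type
  | var : ℕ → Ty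
  | imp : Ty → Ty → Ty
  | conj : Ty → Ty → Ty
  | all : Ty → Ty
  deriving DecidableEq

namespace Ty

/-- Shift (by one) the free type variables of a type at or above cutoff `c` (de Bruijn). -/
def shift (c : ℕ) : Ty → Ty
  | var n => if n < c then var n else var (n + 1)
  | imp a b => imp (a.shift c) (b.shift c)
  | conj a b => conj (a.shift c) (b.shift c)
  | all a => all (a.shift (c + 1))

/-- Capture-avoiding substitution of `B` for type variable `d` (de Bruijn). -/
def subst : Ty → ℕ → Ty → Ty
  | var n, d, B => if n < d then var n else if n = d then (Ty.shift 0)^[d] B else var (n - 1)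
  | imp a b, d, B => imp (a.subst d B) (b.subst d B)
  | conj a b, d, B => conj (a.subst d B) (b.subst d B)
  | all a, d, B => all (a.subst (d + 1) B)

/-- Russell–Prawitz disjunction `A ∨̂ B := ∀X.((A ⊃ X) ∧ (B ⊃ X)) ⊃ X`. -/
def orr (A B : Ty) : Ty :=
  all (imp (conj (imp (A.shift 0) (var 0)) (imp (B.shift 0) (var 0))) (var 0))

/-- Russell–Prawitz absurdity `⊥̂ := ∀X.X`. -/
def bot : Ty := all (var 0)

end Ty

inductive Tm : Type
  | var : ℕ → Tm
  | lam : Ty → Tm → Tm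
  | app : Tm → Tm → Tm
  | pair : Tm → Tm → Tm
  | proj1 : Tm → Tm
  | proj2 : Tm → Tm
  | tlam : Tm → Tm
  | tapp : Tm → Ty → Tm

namespace Tm

/-- Shift the free term variables at or above cutoff `c`. -/
def shiftVar (c : ℕ) : Tm → Tm
  | var n => if n < c then var n else var (n + 1)
  | lam A M => lam A (M.shiftVar (c + 1))
  | app M N => app (M.shiftVar c) (N.shiftVar c)
  | pair M N => pair (M.shiftVar c) (N.shiftVar c)
  | proj1 M => proj1 (M.shiftVar c)
  | proj2 M => proj2 (M.shiftVar c)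
  | tlam M => tlam (M.shiftVar c)
  | tapp M B => tapp (M.shiftVar c) B

/-- Shift the free type variables (in types occurring in a term) at or above cutoff `c`. -/
def shiftTy (c : ℕ) : Tm → Tm
  | var n => var n
  | lam A M => lam (A.shift c) (M.shiftTy c)
  | app M N => app (M.shiftTy c) (N.shiftTy c)
  | pair M N => pair (M.shiftTy c) (N.shiftTy c)
  | proj1 M => proj1 (M.shiftTy c)
  | proj2 M => proj2 (M.shiftTy c)
  | tlam M => tlam (M.shiftTy (c + 1))
  | tapp M B => tapp (M.shiftTy c) (B.shift c)

/-- Swap the term variables `c` and `c+1`. -/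
def swapVar (c : ℕ) : Tm → Tm
  | var n => if n = c then var (c + 1) else if n = c + 1 then var c else var n
  | lam A M => lam A (M.swapVar (c + 1))
  | app M N => app (M.swapVar c) (N.swapVar c)
  | pair M N => pair (M.swapVar c) (N.swapVar c)
  | proj1 M => proj1 (M.swapVar c)
  | proj2 M => proj2 (M.swapVar c)
  | tlam M => tlam (M.swapVar c)
  | tapp M B => tapp (M.swapVar c) B

/-- Capture-avoiding substitution of term `N` for term variable `d`. -/
def substVar : Tm → ℕ → Tm → Tm
  | var n, d, N => if n < d then var n else if n = d then (Tm.shiftVar 0)^[d] N else var (n - 1)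
  | lam A M, d, N => lam A (M.substVar (d + 1) N)
  | app M P, d, N => app (M.substVar d N) (P.substVar d N)
  | pair M P, d, N => pair (M.substVar d N) (P.substVar d N)
  | proj1 M, d, N => proj1 (M.substVar d N)
  | proj2 M, d, N => proj2 (M.substVar d N)
  | tlam M, d, N => tlam (M.substVar d (N.shiftTy 0))
  | tapp M B, d, N => tapp (M.substVar d N) B

/-- Capture-avoiding substitution of type `B` for type variable `d` in a term. -/
def substTy : Tm → ℕ → Ty → Tm
  | var n, _, _ => var n
  | lam A M, d, B => lam (A.subst d B) (M.substTy d B)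
  | app M N, d, B => app (M.substTy d B) (N.substTy d B)
  | pair M N, d, B => pair (M.substTy d B) (N.substTy d B)
  | proj1 M, d, B => proj1 (M.substTy d B)
  | proj2 M, d, B => proj2 (M.substTy d B)
  | tlam M, d, B => tlam (M.substTy (d + 1) B)
  | tapp M C, d, B => tapp (M.substTy d B) (C.subst d B)

end Tm

/-- Compatible closure of a root relation on terms. -/
inductive Compat (R : Tm → Tm → Prop) : Tm → Tm → Prop
  | root {M N} : R M N → Compat R M N
  | lam (A) {M N} : Compat R M N → Compat R (.lam A M) (.lam A N)
  | app1 {M M'} (N) : Compat R M M' → Compat R (.app M N) (.app M' N)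
  | app2 (M) {N N'} : Compat R N N' → Compat R (.app M N) (.app M N')
  | pair1 {M M'} (N) : Compat R M M' → Compat R (.pair M N) (.pair M' N)
  | pair2 (M) {N N'} : Compat R N N' → Compat R (.pair M N) (.pair M N')
  | proj1 {M M'} : Compat R M M' → Compat R (.proj1 M) (.proj1 M')
  | proj2 {M M'} : Compat R M M' → Compat R (.proj2 M) (.proj2 M')
  | tlam {M M'} : Compat R M M' → Compat R (.tlam M) (.tlam M')
  | tapp {M M'} (B) : Compat R M M' → Compat R (.tapp M B) (.tapp M' B)

/-- Root β-reduction rules of system F. -/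
inductive Beta : Tm → Tm → Prop
  | imp (A M N) : Beta (.app (.lam A M) N) (M.substVar 0 N)
  | conj1 (M N) : Beta (.proj1 (.pair M N)) M
  | conj2 (M N) : Beta (.proj2 (.pair M N)) N
  | all (M B) : Beta (.tapp (.tlam M) B) (M.substTy 0 B)

/-- Root η-reduction rules of system F. -/
inductive Eta : Tm → Tm → Prop
  | imp (A M) : Eta (.lam A (.app (M.shiftVar 0) (.var 0))) M
  | conj (M) : Eta (.pair (.proj1 M) (.proj2 M)) M
  | all (M) : Eta (.tlam (.tapp (M.shiftTy 0) (.var 0))) M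

/-- Root ϱ-atomization rules: `M C ⟨λx:A.P, λy:B.Q⟩` with `C` non-atomic. -/
inductive RhoHat : Tm → Tm → Prop
  | imp (M C₁ C₂ A P B Q) :
      RhoHat (.app (.tapp M (.imp C₁ C₂)) (.pair (.lam A P) (.lam B Q)))
        (.lam C₁ (.app (.tapp (M.shiftVar 0) C₂)
          (.pair (.lam A (.app (P.shiftVar 1) (.var 1)))
                 (.lam B (.app (Q.shiftVar 1) (.var 1))))))
  | conj (M C₁ C₂ A P B Q) :
      RhoHat (.app (.tapp M (.conj C₁ C₂)) (.pair (.lam A P) (.lam B Q)))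
        (.pair (.app (.tapp M C₁) (.pair (.lam A (.proj1 P)) (.lam B (.proj1 Q))))
               (.app (.tapp M C₂) (.pair (.lam A (.proj2 P)) (.lam B (.proj2 Q)))))
  | all (M D A P B Q) :
      RhoHat (.app (.tapp M (.all D)) (.pair (.lam A P) (.lam B Q)))
        (.tlam (.app (.tapp (M.shiftTy 0) D)
          (.pair (.lam (A.shift 0) (.tapp (P.shiftTy 0) (.var 0)))
                 (.lam (B.shift 0) (.tapp (Q.shiftTy 0) (.var 0))))))

/-- Root ρ-atomization rules: `M C` with `C` non-atomic. -/
inductive Rho : Tm → Tm → Prop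
  | imp (M C₁ C₂) : Rho (.tapp M (.imp C₁ C₂)) (.lam C₁ (.tapp (M.shiftVar 0) C₂))
  | conj (M C₁ C₂) : Rho (.tapp M (.conj C₁ C₂)) (.pair (.tapp M C₁) (.tapp M C₂))
  | all (M D) : Rho (.tapp M (.all D)) (.tlam (.tapp (M.shiftTy 0) D))

/-- Root δ-conversion rules (variant of ϱ pulling down an introduction). -/
inductive Delta : Tm → Tm → Prop
  | imp (M C₁ C₂ A P B Q) :
      Delta (.app (.tapp M (.imp C₁ C₂)) (.pair (.lam A (.lam C₁ P)) (.lam B (.lam C₁ Q))))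
        (.lam C₁ (.app (.tapp (M.shiftVar 0) C₂)
          (.pair (.lam A (P.swapVar 0)) (.lam B (Q.swapVar 0)))))
  | conj (M C₁ C₂ A P₁ P₂ B Q₁ Q₂) :
      Delta (.app (.tapp M (.conj C₁ C₂)) (.pair (.lam A (.pair P₁ P₂)) (.lam B (.pair Q₁ Q₂))))
        (.pair (.app (.tapp M C₁) (.pair (.lam A P₁) (.lam B Q₁)))
               (.app (.tapp M C₂) (.pair (.lam A P₂) (.lam B Q₂))))
  | all (M D A P B Q) :
      Delta (.app (.tapp M (.all D)) (.pair (.lam A (.tlam P)) (.lam B (.tlam Q))))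
        (.tlam (.app (.tapp (M.shiftTy 0) D)
          (.pair (.lam (A.shift 0) P) (.lam (B.shift 0) Q))))

lemma shiftVar_iter_var (d n : ℕ) : (Tm.shiftVar 0)^[d] (.var n) = .var (n + d) := by
  induction d generalizing n with
  | zero => rfl
  | succ d ih =>
    rw [Function.iterate_succ_apply]
    simp only [Tm.shiftVar, Nat.not_lt_zero, if_false, ih]
    congr 1; omega

lemma substVar_shiftVar_swap (P : Tm) : ∀ c, (P.shiftVar (c+2)).substVar c (.var 1) = P.swapVar c := by
  induction P with
  | var n =>
    intro c
    simp only [Tm.shiftVar, Tm.swapVar]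
    split_ifs <;> simp only [Tm.substVar] <;> split_ifs <;>
      first | rfl | (exfalso; omega) | (rw [shiftVar_iter_var]; congr 1; omega) | (congr 1; omega)
  | lam A M ih => intro c; simp only [Tm.shiftVar, Tm.substVar, Tm.swapVar]; rw [ih (c+1)]
  | app M N ihM ihN => intro c; simp [Tm.shiftVar, Tm.substVar, Tm.swapVar, ihM, ihN]
  | pair M N ihM ihN => intro c; simp [Tm.shiftVar, Tm.substVar, Tm.swapVar, ihM, ihN]
  | proj1 M ih => intro c; simp [Tm.shiftVar, Tm.substVar, Tm.swapVar, ih]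
  | proj2 M ih => intro c; simp [Tm.shiftVar, Tm.substVar, Tm.swapVar, ih]
  | tlam M ih => intro c; simp [Tm.shiftVar, Tm.substVar, Tm.swapVar, Tm.shiftTy, ih]
  | tapp M B ih => intro c; simp [Tm.shiftVar, Tm.substVar, Tm.swapVar, ih]

lemma shift_iter_var (d : ℕ) : (Ty.shift 0)^[d] (.var 0) = .var d := by
  have h : ∀ d n : ℕ, (Ty.shift 0)^[d] (.var n) = .var (n + d) := by
    intro d
    induction d with
    | zero => intro n; rfl
    | succ d ih =>
      intro n
      rw [Function.iterate_succ_apply]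
      simp only [Ty.shift, Nat.not_lt_zero, if_false, ih]
      congr 1; omega
  simpa using h d 0

lemma subst_shift (A : Ty) : ∀ c, (A.shift (c+1)).subst c (.var 0) = A := by
  induction A with
  | var n =>
    intro c
    simp only [Ty.shift]
    split_ifs <;> simp only [Ty.subst] <;> split_ifs <;>
      first | rfl | (exfalso; omega) | (rw [shift_iter_var]; congr 1; omega)
  | imp a b iha ihb => intro c; simp [Ty.shift, Ty.subst, iha, ihb]
  | conj a b iha ihb => intro c; simp [Ty.shift, Ty.subst, iha, ihb]
  | all a ih => intro c; simp only [Ty.shift, Ty.subst]; rw [ih (c+1)]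

lemma substTy_shiftTy (P : Tm) : ∀ c, (P.shiftTy (c+1)).substTy c (.var 0) = P := by
  induction P with
  | var n => intro c; rfl
  | lam A M ih => intro c; simp [Tm.shiftTy, Tm.substTy, subst_shift, ih]
  | app M N ihM ihN => intro c; simp [Tm.shiftTy, Tm.substTy, ihM, ihN]
  | pair M N ihM ihN => intro c; simp [Tm.shiftTy, Tm.substTy, ihM, ihN]
  | proj1 M ih => intro c; simp [Tm.shiftTy, Tm.substTy, ih]
  | proj2 M ih => intro c; simp [Tm.shiftTy, Tm.substTy, ih]
  | tlam M ih => intro c; simp only [Tm.shiftTy, Tm.substTy]; rw [ih (c+1)]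
  | tapp M B ih => intro c; simp [Tm.shiftTy, Tm.substTy, subst_shift, ih]

lemma Compat.mono {R S : Tm → Tm → Prop} (hRS : ∀ a b, R a b → S a b) :
    ∀ {M N}, Compat R M N → Compat S M N := by
  intro M N h
  induction h with
  | root h => exact .root (hRS _ _ h)
  | lam A _ ih => exact .lam A ih
  | app1 N _ ih => exact .app1 N ih
  | app2 M _ ih => exact .app2 M ih
  | pair1 N _ ih => exact .pair1 N ih
  | pair2 M _ ih => exact .pair2 M ih
  | proj1 _ ih => exact .proj1 ih
  | proj2 _ ih => exact .proj2 ih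
  | tlam _ ih => exact .tlam ih
  | tapp B _ ih => exact .tapp B ih

lemma rho_beta_imp (M : Tm) (C₁ C₂ A : Ty) (P : Tm) (B : Ty) (Q : Tm) :
    ∃ t u,
      Compat RhoHat
        (Tm.app (Tm.tapp M (Ty.imp C₁ C₂))
          (Tm.pair (Tm.lam A (Tm.lam C₁ P)) (Tm.lam B (Tm.lam C₁ Q)))) t ∧
      Compat Beta t u ∧
      Compat Beta u
        (Tm.lam C₁ (Tm.app (Tm.tapp (M.shiftVar 0) C₂)
          (Tm.pair (Tm.lam A (P.swapVar 0)) (Tm.lam B (Q.swapVar 0))))) := by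
  refine ⟨.lam C₁ (.app (.tapp (M.shiftVar 0) C₂)
      (.pair (.lam A (.app (.lam C₁ (P.shiftVar 2)) (.var 1)))
             (.lam B (.app (.lam C₁ (Q.shiftVar 2)) (.var 1))))),
    .lam C₁ (.app (.tapp (M.shiftVar 0) C₂)
      (.pair (.lam A (P.swapVar 0))
             (.lam B (.app (.lam C₁ (Q.shiftVar 2)) (.var 1))))), ?_, ?_, ?_⟩
  · have h := Compat.root (RhoHat.imp M C₁ C₂ A (.lam C₁ P) B (.lam C₁ Q))
    simpa [Tm.shiftVar] using h
  · refine .lam C₁ (.app2 _ (.pair1 _ (.lam A ?_)))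
    have h := Compat.root (R := Beta) (Beta.imp C₁ (P.shiftVar 2) (.var 1))
    rwa [substVar_shiftVar_swap] at h
  · refine .lam C₁ (.app2 _ (.pair2 _ (.lam B ?_)))
    have h := Compat.root (R := Beta) (Beta.imp C₁ (Q.shiftVar 2) (.var 1))
    rwa [substVar_shiftVar_swap] at h

/-- Every δ-step decomposes into ϱβ-steps: if `M →_δ N` then `M →⁺_{ϱβ} N`.
Moreover, concretely, in the implication case the δ-redex does one ϱ-step
followed by two β-steps reaching the δ-contractum. -/
theorem delta_subset_rhoHat_beta :
    (∀ M N : Tm, Compat Delta M N →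
      Relation.TransGen (Compat (fun a b => RhoHat a b ∨ Beta a b)) M N) ∧
    (∀ (M : Tm) (C₁ C₂ A : Ty) (P : Tm) (B : Ty) (Q : Tm),
      ∃ t u,
        Compat RhoHat
          (Tm.app (Tm.tapp M (Ty.imp C₁ C₂))
            (Tm.pair (Tm.lam A (Tm.lam C₁ P)) (Tm.lam B (Tm.lam C₁ Q)))) t ∧
        Compat Beta t u ∧
        Compat Beta u
          (Tm.lam C₁ (Tm.app (Tm.tapp (M.shiftVar 0) C₂)
            (Tm.pair (Tm.lam A (P.swapVar 0)) (Tm.lam B (Q.swapVar 0)))))) := by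
  constructor
  · intro M N h
    induction h with
    | root h =>
      cases h with
      | imp M C₁ C₂ A P B Q =>
        obtain ⟨t, u, h1, h2, h3⟩ := rho_beta_imp M C₁ C₂ A P B Q
        exact .tail (.tail (.single (h1.mono (fun a b => Or.inl)))
          (h2.mono (fun a b => Or.inr))) (h3.mono (fun a b => Or.inr))
      | conj M C₁ C₂ A P₁ P₂ B Q₁ Q₂ =>
        refine .tail (.tail (.tail (.tail (.single
          (Compat.root (Or.inl
            (RhoHat.conj M C₁ C₂ A (.pair P₁ P₂) B (.pair Q₁ Q₂)))))
          (.pair1 _ (.app2 _ (.pair1 _ (.lam A (.root (Or.inr (Beta.conj1 P₁ P₂))))))))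
          (.pair1 _ (.app2 _ (.pair2 _ (.lam B (.root (Or.inr (Beta.conj1 Q₁ Q₂))))))))
          (.pair2 _ (.app2 _ (.pair1 _ (.lam A (.root (Or.inr (Beta.conj2 P₁ P₂))))))))
          (.pair2 _ (.app2 _ (.pair2 _ (.lam B (.root (Or.inr (Beta.conj2 Q₁ Q₂)))))))
      | all M D A P B Q =>
        have h1 : Compat (fun a b => RhoHat a b ∨ Beta a b)
            (Tm.app (Tm.tapp M (Ty.all D))
              (Tm.pair (Tm.lam A (Tm.tlam P)) (Tm.lam B (Tm.tlam Q))))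
            (Tm.tlam (.app (.tapp (M.shiftTy 0) D)
              (.pair (.lam (A.shift 0) (.tapp (.tlam (P.shiftTy 1)) (.var 0)))
                     (.lam (B.shift 0) (.tapp (.tlam (Q.shiftTy 1)) (.var 0)))))) := by
          have h := Compat.root (RhoHat.all M D A (.tlam P) B (.tlam Q))
          have h' := h.mono (S := fun a b => RhoHat a b ∨ Beta a b) (fun a b => Or.inl)
          simpa [Tm.shiftTy] using h'
        have hP : Compat Beta (Tm.tapp (.tlam (P.shiftTy 1)) (.var 0)) P := by
          have h := Compat.root (R := Beta) (Beta.all (P.shiftTy 1) (.var 0))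
          rwa [substTy_shiftTy] at h
        have hQ : Compat Beta (Tm.tapp (.tlam (Q.shiftTy 1)) (.var 0)) Q := by
          have h := Compat.root (R := Beta) (Beta.all (Q.shiftTy 1) (.var 0))
          rwa [substTy_shiftTy] at h
        exact .tail (.tail (.single h1)
          (.tlam (.app2 _ (.pair1 _ (.lam _ (hP.mono (fun a b => Or.inr)))))))
          (.tlam (.app2 _ (.pair2 _ (.lam _ (hQ.mono (fun a b => Or.inr))))))
    | lam A _ ih => exact ih.lift (fun x => Tm.lam A x) (fun a b => Compat.lam A)
    | app1 N _ ih => exact ih.lift (fun x => Tm.app x N) (fun a b => Compat.app1 N)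
    | app2 M _ ih => exact ih.lift (fun x => Tm.app M x) (fun a b => Compat.app2 M)
    | pair1 N _ ih => exact ih.lift (fun x => Tm.pair x N) (fun a b => Compat.pair1 N)
    | pair2 M _ ih => exact ih.lift (fun x => Tm.pair M x) (fun a b => Compat.pair2 M)
    | proj1 _ ih => exact ih.lift (fun x => Tm.proj1 x) (fun a b => Compat.proj1)
    | proj2 _ ih => exact ih.lift (fun x => Tm.proj2 x) (fun a b => Compat.proj2)
    | tlam _ ih => exact ih.lift (fun x => Tm.tlam x) (fun a b => Compat.tlam)
    | tapp B _ ih => exact ih.lift (fun x => Tm.tapp x B) (fun a b => Compat.tapp B)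
  · exact rho_beta_imp
end

section
/- If M →_ρ N in system F, then M =_{ϵη} N: every ρ-atomization step is derivable as an ϵη-equality. Concretely: M(C⊃D) ←_η λz:C.(M(C⊃D))z →_ϵ λz:C.MD; M(C₁∧C₂) ←_η ⟨(M(C₁∧C₂))1, (M(C₁∧C₂))2⟩ →²_ϵ ⟨MC₁, MC₂⟩; M(∀Y.C₀) ←_η ΛX.(M(∀Y.C₀))X →_ϵ ΛX.M([X/Y]C₀) = ΛY.MC₀. -/
/-- Root ϵ-commuting-conversion rules for the defined absurdity. -/
inductive Eps : Tm → Tm → Prop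
  | imp (M C₁ C₂ N) : Eps (.app (.tapp M (.imp C₁ C₂)) N) (.tapp M C₂)
  | conj1 (M C₁ C₂) : Eps (.proj1 (.tapp M (.conj C₁ C₂))) (.tapp M C₁)
  | conj2 (M C₁ C₂) : Eps (.proj2 (.tapp M (.conj C₁ C₂))) (.tapp M C₂)
  | all (M C' C'') : Eps (.tapp (.tapp M (.all C')) C'') (.tapp M (C'.subst 0 C''))


section Aux

abbrev EE := Compat (fun a b => Eps a b ∨ Eta a b)
abbrev EQ := Relation.EqvGen EE

lemma shift_iterate_var : ∀ c : ℕ, (Ty.shift 0)^[c] (Ty.var 0) = Ty.var c := by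
  intro c
  induction c with
  | zero => rfl
  | succ c ih => rw [Function.iterate_succ_apply', ih]; simp [Ty.shift]

lemma shift_subst_var : ∀ (A : Ty) (c : ℕ), (A.shift (c+1)).subst c (Ty.var 0) = A := by
  intro A
  induction A with
  | var n =>
    intro c
    simp only [Ty.shift]
    by_cases h : n < c + 1
    · simp only [if_pos h, Ty.subst]
      rcases lt_or_eq_of_le (Nat.lt_succ_iff.mp h) with h' | h'
      · rw [if_pos h']
      · subst h'; rw [if_neg (lt_irrefl _), if_pos rfl, shift_iterate_var]
    · have h1 : ¬ n < c := fun hc => h (Nat.lt_succ_of_lt hc)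
      simp only [if_neg h, Ty.subst]
      rw [if_neg (by omega), if_neg (by omega)]
      simp
  | imp a b iha ihb => intro c; simp [Ty.shift, Ty.subst, iha, ihb]
  | conj a b iha ihb => intro c; simp [Ty.shift, Ty.subst, iha, ihb]
  | all a ih => intro c; simp [Ty.shift, Ty.subst, ih]

lemma eqv_congr {M N : Tm} (f : Tm → Tm)
    (hf : ∀ a b, EE a b → EE (f a) (f b)) (h : EQ M N) : EQ (f M) (f N) := by
  induction h with
  | rel a b hab => exact Relation.EqvGen.rel _ _ (hf _ _ hab)
  | refl a => exact Relation.EqvGen.refl _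
  | symm a b _ ih => exact Relation.EqvGen.symm _ _ ih
  | trans a b c _ _ ih1 ih2 => exact Relation.EqvGen.trans _ _ _ ih1 ih2

end Aux

theorem rho_root (M N : Tm) (h : Rho M N) : EQ M N := by
  cases h with
  | imp M C₁ C₂ =>
    apply Relation.EqvGen.trans _ (Tm.lam C₁ (.app ((Tm.tapp M (.imp C₁ C₂)).shiftVar 0) (.var 0)))
    · exact Relation.EqvGen.symm _ _ (Relation.EqvGen.rel _ _
        (Compat.root (Or.inr (Eta.imp C₁ (.tapp M (.imp C₁ C₂))))))
    · exact Relation.EqvGen.rel _ _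
        (Compat.lam _ (Compat.root (Or.inl (Eps.imp (M.shiftVar 0) C₁ C₂ (.var 0)))))
  | conj M C₁ C₂ =>
    apply Relation.EqvGen.trans _
      (Tm.pair (.proj1 (.tapp M (.conj C₁ C₂))) (.proj2 (.tapp M (.conj C₁ C₂))))
    · exact Relation.EqvGen.symm _ _ (Relation.EqvGen.rel _ _
        (Compat.root (Or.inr (Eta.conj _))))
    · apply Relation.EqvGen.trans _ (Tm.pair (.tapp M C₁) (.proj2 (.tapp M (.conj C₁ C₂))))
      · exact Relation.EqvGen.rel _ _ (Compat.pair1 _ (Compat.root (Or.inl (Eps.conj1 M C₁ C₂))))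
      · exact Relation.EqvGen.rel _ _ (Compat.pair2 _ (Compat.root (Or.inl (Eps.conj2 M C₁ C₂))))
  | all M D =>
    apply Relation.EqvGen.trans _ (Tm.tlam (.tapp ((Tm.tapp M (.all D)).shiftTy 0) (.var 0)))
    · exact Relation.EqvGen.symm _ _ (Relation.EqvGen.rel _ _
        (Compat.root (Or.inr (Eta.all _))))
    · have : Tm.tlam (.tapp ((Tm.tapp M (.all D)).shiftTy 0) (.var 0))
          = Tm.tlam (.tapp (.tapp (M.shiftTy 0) (.all (D.shift 1))) (.var 0)) := rfl
      rw [this]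
      have h2 := Eps.all (M.shiftTy 0) (D.shift 1) (.var 0)
      rw [shift_subst_var] at h2
      exact Relation.EqvGen.rel _ _ (Compat.tlam (Compat.root (Or.inl h2)))

/-- Every ρ-atomization step is derivable as an ϵη-equality:
if `M →_ρ N` then `M =_{ϵη} N`. -/
theorem rho_subset_eps_eta_equality :
    ∀ M N : Tm, Compat Rho M N →
      Relation.EqvGen (Compat (fun a b => Eps a b ∨ Eta a b)) M N := by
  intro M N h
  induction h with
  | root h => exact rho_root _ _ h
  | lam A _ ih => exact eqv_congr (Tm.lam A) (fun _ _ => Compat.lam A) ih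
  | app1 N _ ih => exact eqv_congr (fun x => Tm.app x N) (fun _ _ => Compat.app1 N) ih
  | app2 M _ ih => exact eqv_congr (Tm.app M) (fun _ _ => Compat.app2 M) ih
  | pair1 N _ ih => exact eqv_congr (fun x => Tm.pair x N) (fun _ _ => Compat.pair1 N) ih
  | pair2 M _ ih => exact eqv_congr (Tm.pair M) (fun _ _ => Compat.pair2 M) ih
  | proj1 _ ih => exact eqv_congr Tm.proj1 (fun _ _ => Compat.proj1) ih
  | proj2 _ ih => exact eqv_congr Tm.proj2 (fun _ _ => Compat.proj2) ih
  | tlam _ ih => exact eqv_congr Tm.tlam (fun _ _ => Compat.tlam) ih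
  | tapp B _ ih => exact eqv_congr (fun x => Tm.tapp x B) (fun _ _ => Compat.tapp B) ih
end

section
/- Fine subject reduction for atomization: in system F, if M →_{ϱρ} M' is a fine reduction in environment Γ (i.e., every contracted ϱ-redex MC⟨λx:A.P,λy:B.Q⟩ has M of type A ∨̂ B, and every contracted ρ-redex MC has M of type ∀X.X, in the environment extending Γ by the binders crossed) and Γ ⊢ M : A, then Γ ⊢ M' : A. -/
/-- Typing judgment of system F (contexts are de Bruijn lists of types). -/
inductive Typing : List Ty → Tm → Ty → Prop
  | var {Γ n A} : Γ[n]? = some A → Typing Γ (.var n) A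
  | lam {Γ A M B} : Typing (A :: Γ) M B → Typing Γ (.lam A M) (.imp A B)
  | app {Γ M N A B} : Typing Γ M (.imp A B) → Typing Γ N A → Typing Γ (.app M N) B
  | pair {Γ M N A B} : Typing Γ M A → Typing Γ N B → Typing Γ (.pair M N) (.conj A B)
  | proj1 {Γ M A B} : Typing Γ M (.conj A B) → Typing Γ (.proj1 M) A
  | proj2 {Γ M A B} : Typing Γ M (.conj A B) → Typing Γ (.proj2 M) B
  | tlam {Γ M A} : Typing (Γ.map (Ty.shift 0)) M A → Typing Γ (.tlam M) (.all A)
  | tapp {Γ M A} (B) : Typing Γ M (.all A) → Typing Γ (.tapp M B) (A.subst 0 B)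

/-- Fine ϱρ-reduction in an environment: root ϱ-redexes require the head to have a
Russell–Prawitz disjunction type, root ρ-redexes require the head to have type `∀X.X`;
the compatible closure extends the environment under binders. -/
inductive Fine : List Ty → Tm → Tm → Prop
  | rhoHat_imp {Γ M C₁ C₂ A P B Q} (h : Typing Γ M (Ty.orr A B)) :
      Fine Γ (.app (.tapp M (.imp C₁ C₂)) (.pair (.lam A P) (.lam B Q)))
        (.lam C₁ (.app (.tapp (M.shiftVar 0) C₂)
          (.pair (.lam A (.app (P.shiftVar 1) (.var 1)))
                 (.lam B (.app (Q.shiftVar 1) (.var 1))))))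
  | rhoHat_conj {Γ M C₁ C₂ A P B Q} (h : Typing Γ M (Ty.orr A B)) :
      Fine Γ (.app (.tapp M (.conj C₁ C₂)) (.pair (.lam A P) (.lam B Q)))
        (.pair (.app (.tapp M C₁) (.pair (.lam A (.proj1 P)) (.lam B (.proj1 Q))))
               (.app (.tapp M C₂) (.pair (.lam A (.proj2 P)) (.lam B (.proj2 Q)))))
  | rhoHat_all {Γ M D A P B Q} (h : Typing Γ M (Ty.orr A B)) :
      Fine Γ (.app (.tapp M (.all D)) (.pair (.lam A P) (.lam B Q)))
        (.tlam (.app (.tapp (M.shiftTy 0) D)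
          (.pair (.lam (A.shift 0) (.tapp (P.shiftTy 0) (.var 0)))
                 (.lam (B.shift 0) (.tapp (Q.shiftTy 0) (.var 0))))))
  | rho_imp {Γ M C₁ C₂} (h : Typing Γ M Ty.bot) :
      Fine Γ (.tapp M (.imp C₁ C₂)) (.lam C₁ (.tapp (M.shiftVar 0) C₂))
  | rho_conj {Γ M C₁ C₂} (h : Typing Γ M Ty.bot) :
      Fine Γ (.tapp M (.conj C₁ C₂)) (.pair (.tapp M C₁) (.tapp M C₂))
  | rho_all {Γ M D} (h : Typing Γ M Ty.bot) :
      Fine Γ (.tapp M (.all D)) (.tlam (.tapp (M.shiftTy 0) D))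
  | lam {Γ A M N} : Fine (A :: Γ) M N → Fine Γ (.lam A M) (.lam A N)
  | app1 {Γ M M' N} : Fine Γ M M' → Fine Γ (.app M N) (.app M' N)
  | app2 {Γ M N N'} : Fine Γ N N' → Fine Γ (.app M N) (.app M N')
  | pair1 {Γ M M' N} : Fine Γ M M' → Fine Γ (.pair M N) (.pair M' N)
  | pair2 {Γ M N N'} : Fine Γ N N' → Fine Γ (.pair M N) (.pair M N')
  | proj1 {Γ M M'} : Fine Γ M M' → Fine Γ (.proj1 M) (.proj1 M')
  | proj2 {Γ M M'} : Fine Γ M M' → Fine Γ (.proj2 M) (.proj2 M')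
  | tlam {Γ M M'} : Fine (Γ.map (Ty.shift 0)) M M' → Fine Γ (.tlam M) (.tlam M')
  | tapp {Γ M M' B} : Fine Γ M M' → Fine Γ (.tapp M B) (.tapp M' B)

namespace Ty

lemma shift_shift (c k : ℕ) (h : c ≤ k) (T : Ty) :
    (T.shift c).shift (k + 1) = (T.shift k).shift c := by
  induction T generalizing c k with
  | var n =>
      by_cases h1 : n < c
      · have h2 : n < k := lt_of_lt_of_le h1 h
        have h3 : n < k + 1 := by omega
        simp [shift, h1, h2, h3]
      · by_cases h2 : n < k
        · have h3 : n + 1 < k + 1 := by omega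
          simp [shift, h1, h2, h3]
        · have h3 : ¬ n + 1 < k + 1 := by omega
          have h4 : ¬ n + 1 < c := by omega
          simp [shift, h1, h2, h3, h4]
  | imp a b iha ihb => simp [shift, iha _ _ h, ihb _ _ h]
  | conj a b iha ihb => simp [shift, iha _ _ h, ihb _ _ h]
  | all a iha => simp [shift, iha (c+1) (k+1) (by omega)]

lemma iter_shift0_shift (d k : ℕ) (B : Ty) :
    (Ty.shift 0)^[d] (B.shift k) = ((Ty.shift 0)^[d] B).shift (k + d) := by
  induction d generalizing k with
  | zero => simp
  | succ d ih =>
      rw [Function.iterate_succ_apply', Function.iterate_succ_apply', ih]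
      exact (shift_shift 0 (k + d) (by omega) _).symm

lemma shift_subst (d c : ℕ) (h : d ≤ c) (A B : Ty) :
    (A.subst d B).shift c = (A.shift (c + 1)).subst d (B.shift (c - d)) := by
  induction A generalizing d c with
  | var n =>
      rcases lt_trichotomy n d with hn | rfl | hn
      · have h1 : n < c := by omega
        have h2 : n < c + 1 := by omega
        simp [subst, shift, hn, h1, h2]
      · rw [subst, if_neg (lt_irrefl n), if_pos rfl,
          shift, if_pos (by omega : n < c + 1),
          subst, if_neg (lt_irrefl n), if_pos rfl,
          iter_shift0_shift, Nat.sub_add_cancel h]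
      · have h1 : ¬ n < d := by omega
        have h2 : ¬ n = d := by omega
        rw [subst, if_neg h1, if_neg h2, shift]
        by_cases hc : n < c + 1
        · rw [if_pos (by omega : n - 1 < c), shift, if_pos hc, subst,
            if_neg h1, if_neg h2]
        · rw [if_neg (by omega : ¬ n - 1 < c), shift, if_neg hc, subst,
            if_neg (by omega : ¬ n + 1 < d), if_neg (by omega : ¬ n + 1 = d)]
          congr 1
          omega
  | imp a b iha ihb => simp [subst, shift, iha _ _ h, ihb _ _ h]
  | conj a b iha ihb => simp [subst, shift, iha _ _ h, ihb _ _ h]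
  | all a iha =>
      simp only [subst, shift, all.injEq]
      rw [iha (d+1) (c+1) (by omega)]
      congr 2
      omega

lemma shift_subst_cancel (d : ℕ) (T B : Ty) : (T.shift d).subst d B = T := by
  induction T generalizing d with
  | var n =>
      by_cases h1 : n < d
      · rw [shift, if_pos h1, subst, if_pos h1]
      · rw [shift, if_neg h1, subst, if_neg (by omega : ¬ n + 1 < d),
          if_neg (by omega : ¬ n + 1 = d), Nat.add_sub_cancel]
  | imp a b iha ihb => simp [shift, subst, iha, ihb]
  | conj a b iha ihb => simp [shift, subst, iha, ihb]
  | all a iha => simp [shift, subst, iha]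

lemma iter_shift0_var (d : ℕ) : (Ty.shift 0)^[d] (Ty.var 0) = Ty.var d := by
  induction d with
  | zero => rfl
  | succ d ih => rw [Function.iterate_succ_apply', ih]; simp [shift]

lemma shift_succ_subst_var (d : ℕ) (T : Ty) :
    (T.shift (d + 1)).subst d (Ty.var 0) = T := by
  induction T generalizing d with
  | var n =>
      rcases lt_trichotomy n d with h | rfl | h
      · rw [shift, if_pos (by omega : n < d + 1), subst, if_pos h]
      · rw [shift, if_pos (by omega : n < n + 1), subst, if_neg (lt_irrefl n),
          if_pos rfl, iter_shift0_var]
      · rw [shift, if_neg (by omega : ¬ n < d + 1), subst,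
          if_neg (by omega : ¬ n + 1 < d), if_neg (by omega : ¬ n + 1 = d),
          Nat.add_sub_cancel]
  | imp a b iha ihb => simp [shift, subst, iha, ihb]
  | conj a b iha ihb => simp [shift, subst, iha, ihb]
  | all a iha => simp [shift, subst, iha]

lemma orr_shift (c : ℕ) (A B : Ty) :
    (Ty.orr A B).shift c = Ty.orr (A.shift c) (B.shift c) := by
  simp [Ty.orr, shift, if_pos (by omega : 0 < c + 1),
    shift_shift 0 c (by omega)]

lemma orr_subst (A B C : Ty) :
    (Ty.imp (Ty.conj (Ty.imp (A.shift 0) (Ty.var 0)) (Ty.imp (B.shift 0) (Ty.var 0)))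
      (Ty.var 0)).subst 0 C = Ty.imp (Ty.conj (Ty.imp A C) (Ty.imp B C)) C := by
  simp [Ty.subst, shift_subst_cancel]

end Ty

lemma typing_unique {Γ M A B} (h1 : Typing Γ M A) (h2 : Typing Γ M B) : A = B := by
  induction h1 generalizing B with
  | var hA => cases h2 with | var hB => exact Option.some.inj (hA.symm.trans hB)
  | lam _ ih => cases h2 with | lam hB => rw [ih hB]
  | app _ _ ih _ => cases h2 with | app hB _ => injection ih hB
  | pair _ _ ih1 ih2 => cases h2 with | pair hB hB' => rw [ih1 hB, ih2 hB']
  | proj1 _ ih => cases h2 with | proj1 hB => injection ih hB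
  | proj2 _ ih => cases h2 with | proj2 hB => injection (ih hB)
  | tlam _ ih => cases h2 with | tlam hB => rw [ih hB]
  | tapp B _ ih => cases h2 with | tapp _ hB => rw [(Ty.all.injEq _ _).mp (ih hB)]

lemma typing_shiftVar {Γ M A} (h : Typing Γ M A) :
    ∀ {Δ : List Ty} {c : ℕ},
      (∀ n B, Γ[n]? = some B → Δ[if n < c then n else n + 1]? = some B) →
      Typing Δ (M.shiftVar c) A := by
  induction h with
  | @var _ n A hA =>
      intro Δ c hctx
      have := hctx n A hA
      simp only [Tm.shiftVar]
      split_ifs at this ⊢ <;> exact Typing.var this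
  | lam _ ih =>
      intro Δ c hctx
      refine Typing.lam (ih ?_)
      intro n B hn
      cases n with
      | zero => simpa using hn
      | succ m =>
          have := hctx m B (by simpa using hn)
          simp only [List.getElem?_cons_succ] at hn
          by_cases hm : m < c
          · simpa [hm, Nat.succ_lt_succ hm] using this
          · rw [if_neg hm] at this
            rw [if_neg (by omega)]
            simpa using this
  | app _ _ ih1 ih2 => exact fun hctx => Typing.app (ih1 hctx) (ih2 hctx)
  | pair _ _ ih1 ih2 => exact fun hctx => Typing.pair (ih1 hctx) (ih2 hctx)
  | proj1 _ ih => exact fun hctx => Typing.proj1 (ih hctx)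
  | proj2 _ ih => exact fun hctx => Typing.proj2 (ih hctx)
  | tlam _ ih =>
      intro Δ c hctx
      refine Typing.tlam (ih ?_)
      intro n B hn
      rw [List.getElem?_map] at hn ⊢
      obtain ⟨B₀, hB₀, rfl⟩ := Option.map_eq_some_iff.mp hn
      rw [hctx n B₀ hB₀]; rfl
  | tapp B _ ih => exact fun hctx => Typing.tapp B (ih hctx)

lemma typing_shiftTy {Γ M A} (h : Typing Γ M A) :
    ∀ {Δ : List Ty} {c : ℕ},
      (∀ (n : ℕ) (B : Ty), Γ[n]? = some B → Δ[n]? = some (B.shift c)) →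
      Typing Δ (M.shiftTy c) (A.shift c) := by
  induction h with
  | @var _ n A hA => exact fun hctx => Typing.var (hctx n A hA)
  | lam _ ih =>
      intro Δ c hctx
      refine Typing.lam (ih ?_)
      intro n B hn
      cases n with
      | zero => simp_all
      | succ m => simpa using hctx m B (by simpa using hn)
  | app _ _ ih1 ih2 => exact fun hctx => Typing.app (ih1 hctx) (ih2 hctx)
  | pair _ _ ih1 ih2 => exact fun hctx => Typing.pair (ih1 hctx) (ih2 hctx)
  | proj1 _ ih => exact fun hctx => Typing.proj1 (ih hctx)
  | proj2 _ ih => exact fun hctx => Typing.proj2 (ih hctx)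
  | tlam _ ih =>
      intro Δ c hctx
      refine Typing.tlam (ih ?_)
      intro n B hn
      rw [List.getElem?_map] at hn ⊢
      obtain ⟨B₀, hB₀, rfl⟩ := Option.map_eq_some_iff.mp hn
      rw [hctx n B₀ hB₀]
      simp [Ty.shift_shift 0 c (by omega)]
  | @tapp _ _ A B _ ih =>
      intro Δ c hctx
      rw [Ty.shift_subst 0 c (by omega)]
      simpa [Tm.shiftTy] using Typing.tapp (B.shift c) (ih hctx)

/-- weaken by one extra hypothesis at the head of the context -/
lemma typing_weaken0 {Γ M A} (C : Ty) (h : Typing Γ M A) :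
    Typing (C :: Γ) (M.shiftVar 0) A := by
  refine typing_shiftVar h ?_
  intro n B hn
  simpa using hn

/-- weaken by one extra hypothesis at position 1 of the context -/
lemma typing_weaken1 {Γ M A D} (C : Ty) (h : Typing (D :: Γ) M A) :
    Typing (D :: C :: Γ) (M.shiftVar 1) A := by
  refine typing_shiftVar h ?_
  intro n B hn
  match n with
  | 0 => simpa using hn
  | n + 1 => simpa using hn

/-- type-variable weakening -/
lemma typing_shiftTy0 {Γ M A} (h : Typing Γ M A) :
    Typing (Γ.map (Ty.shift 0)) (M.shiftTy 0) (A.shift 0) := by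
  refine typing_shiftTy h ?_
  intro n B hn
  simp [List.getElem?_map, hn]

lemma tapp_inv {Γ M B T} (h : Typing Γ (.tapp M B) T) :
    ∃ S, Typing Γ M (.all S) ∧ T = S.subst 0 B := by
  cases h with
  | tapp _ h => exact ⟨_, h, rfl⟩

/-- Fine subject reduction for atomization: if `M →_{ϱρ} M'` is fine in `Γ`
and `Γ ⊢ M : A`, then `Γ ⊢ M' : A`. -/
theorem fine_subject_reduction {Γ : List Ty} {M M' : Tm} {A : Ty}
    (h : Fine Γ M M') (hM : Typing Γ M A) : Typing Γ M' A := by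
  revert hM
  induction h generalizing A with
  | @rhoHat_imp Γ M C₁ C₂ A₀ P B₀ Q hor =>
      intro hM
      cases hM with
      | app htapp hpair =>
        obtain ⟨T, hMall, hTeq⟩ := tapp_inv htapp
        have hT := typing_unique hMall hor
        rw [Ty.orr] at hT
        injection hT with hT
        subst hT
        rw [Ty.orr_subst] at hTeq
        injection hTeq with h1 h2
        subst h1; subst h2
        cases hpair with
        | pair hlP hlQ =>
          cases hlP with | lam hP =>
          cases hlQ with | lam hQ =>
          refine Typing.lam (Typing.app
            (A := Ty.conj (Ty.imp A₀ C₂) (Ty.imp B₀ C₂))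
            ?_ (Typing.pair (Typing.lam ?_) (Typing.lam ?_)))
          · have hsh := typing_weaken0 C₁ hor
            rw [Ty.orr] at hsh
            have h2 := Typing.tapp C₂ hsh
            rw [Ty.orr_subst] at h2
            exact h2
          · exact Typing.app (typing_weaken1 C₁ hP) (Typing.var (by simp))
          · exact Typing.app (typing_weaken1 C₁ hQ) (Typing.var (by simp))
  | @rhoHat_conj Γ M C₁ C₂ A₀ P B₀ Q hor =>
      intro hM
      cases hM with
      | app htapp hpair =>
        obtain ⟨T, hMall, hTeq⟩ := tapp_inv htapp
        have hT := typing_unique hMall hor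
        rw [Ty.orr] at hT
        injection hT with hT
        subst hT
        rw [Ty.orr_subst] at hTeq
        injection hTeq with h1 h2
        subst h1; subst h2
        cases hpair with
        | pair hlP hlQ =>
          cases hlP with | lam hP =>
          cases hlQ with | lam hQ =>
          have key : ∀ C : Ty, Typing Γ (.tapp M C)
              (.imp (.conj (.imp A₀ C) (.imp B₀ C)) C) := by
            intro C
            have h' := hor
            rw [Ty.orr] at h'
            have h2 := Typing.tapp C h'
            rwa [Ty.orr_subst] at h2
          exact Typing.pair
            (Typing.app (key C₁) (Typing.pair (Typing.lam (Typing.proj1 hP))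
              (Typing.lam (Typing.proj1 hQ))))
            (Typing.app (key C₂) (Typing.pair (Typing.lam (Typing.proj2 hP))
              (Typing.lam (Typing.proj2 hQ))))
  | @rhoHat_all Γ M D A₀ P B₀ Q hor =>
      intro hM
      cases hM with
      | app htapp hpair =>
        obtain ⟨T, hMall, hTeq⟩ := tapp_inv htapp
        have hT := typing_unique hMall hor
        rw [Ty.orr] at hT
        injection hT with hT
        subst hT
        rw [Ty.orr_subst] at hTeq
        injection hTeq with h1 h2
        subst h1; subst h2
        cases hpair with
        | pair hlP hlQ =>
          cases hlP with | lam hP =>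
          cases hlQ with | lam hQ =>
          refine Typing.tlam (Typing.app
            (A := Ty.conj (Ty.imp (A₀.shift 0) D) (Ty.imp (B₀.shift 0) D))
            ?_ (Typing.pair (Typing.lam ?_) (Typing.lam ?_)))
          · have hsh := typing_shiftTy0 hor
            rw [Ty.orr_shift, Ty.orr] at hsh
            have h2 := Typing.tapp D hsh
            rw [Ty.orr_subst] at h2
            exact h2
          · have hsh := typing_shiftTy0 hP
            have h2 := Typing.tapp (Ty.var 0) hsh
            have h3 : (D.shift (0 + 1)).subst 0 (Ty.var 0) = D :=
              Ty.shift_succ_subst_var 0 D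
            rw [show (Ty.all D).shift 0 = Ty.all (D.shift (0 + 1)) from rfl] at hsh
            have h2' := Typing.tapp (Ty.var 0) hsh
            rw [h3] at h2'
            simpa using h2'
          · have hsh := typing_shiftTy0 hQ
            have h3 : (D.shift (0 + 1)).subst 0 (Ty.var 0) = D :=
              Ty.shift_succ_subst_var 0 D
            rw [show (Ty.all D).shift 0 = Ty.all (D.shift (0 + 1)) from rfl] at hsh
            have h2' := Typing.tapp (Ty.var 0) hsh
            rw [h3] at h2'
            simpa using h2'
  | @rho_imp Γ M C₁ C₂ hbot =>
      intro hM
      obtain ⟨T, hMall, hTeq⟩ := tapp_inv hM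
      have hT := typing_unique hMall hbot
      rw [Ty.bot] at hT
      injection hT with hT
      subst hT
      simp only [Ty.subst, Nat.lt_irrefl, if_neg (lt_irrefl 0), if_pos rfl,
        Function.iterate_zero, id_eq] at hTeq
      subst hTeq
      refine Typing.lam ?_
      have hsh := typing_weaken0 C₁ hbot
      rw [Ty.bot] at hsh
      have h2 := Typing.tapp C₂ hsh
      simpa [Ty.subst] using h2
  | @rho_conj Γ M C₁ C₂ hbot =>
      intro hM
      obtain ⟨T, hMall, hTeq⟩ := tapp_inv hM
      have hT := typing_unique hMall hbot
      rw [Ty.bot] at hT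
      injection hT with hT
      subst hT
      simp only [Ty.subst, if_neg (lt_irrefl 0), if_pos rfl,
        Function.iterate_zero, id_eq] at hTeq
      subst hTeq
      have h' := hbot
      rw [Ty.bot] at h'
      have k₁ := Typing.tapp C₁ h'
      have k₂ := Typing.tapp C₂ h'
      simp only [Ty.subst, if_neg (lt_irrefl 0), if_pos rfl,
        Function.iterate_zero, id_eq] at k₁ k₂
      exact Typing.pair k₁ k₂
  | @rho_all Γ M D hbot =>
      intro hM
      obtain ⟨T, hMall, hTeq⟩ := tapp_inv hM
      have hT := typing_unique hMall hbot
      rw [Ty.bot] at hT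
      injection hT with hT
      subst hT
      simp only [Ty.subst, if_neg (lt_irrefl 0), if_pos rfl,
        Function.iterate_zero, id_eq] at hTeq
      subst hTeq
      refine Typing.tlam ?_
      have hsh := typing_shiftTy0 hbot
      rw [show Ty.bot.shift 0 = Ty.bot from rfl, Ty.bot] at hsh
      have h2 := Typing.tapp D hsh
      simp only [Ty.subst, if_neg (lt_irrefl 0), if_pos rfl,
        Function.iterate_zero, id_eq] at h2
      exact h2
  | lam _ ih =>
      intro hM
      cases hM with
      | lam hB => exact Typing.lam (ih hB)
  | app1 _ ih =>
      intro hM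
      cases hM with
      | app h1 h2 => exact Typing.app (ih h1) h2
  | app2 _ ih =>
      intro hM
      cases hM with
      | app h1 h2 => exact Typing.app h1 (ih h2)
  | pair1 _ ih =>
      intro hM
      cases hM with
      | pair h1 h2 => exact Typing.pair (ih h1) h2
  | pair2 _ ih =>
      intro hM
      cases hM with
      | pair h1 h2 => exact Typing.pair h1 (ih h2)
  | proj1 _ ih =>
      intro hM
      cases hM with
      | proj1 h1 => exact Typing.proj1 (ih h1)
  | proj2 _ ih =>
      intro hM
      cases hM with
      | proj2 h1 => exact Typing.proj2 (ih h1)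
  | tlam _ ih =>
      intro hM
      cases hM with
      | tlam h1 => exact Typing.tlam (ih h1)
  | tapp _ ih =>
      intro hM
      cases hM
      rename_i h1
      exact Typing.tapp _ (ih h1)
end

section
/- Fine termination of atomization: in system F, fine ϱρ-reduction in an environment Γ starting from a term typable in Γ is terminating; i.e., there is no infinite sequence M₀ →_{ϱρ} M₁ →_{ϱρ} M₂ →_{ϱρ} ⋯ of fine reductions in Γ with M₀ typable in Γ. -/
/-- Size of a type, used for the termination weight. -/
def tsize : Ty → ℕ
  | .var _ => 0
  | .imp _ b => 2 * (tsize b) ^ 2 + 3 * tsize b + 1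
  | .conj a b => 1 + tsize a + tsize b
  | .all a => 1 + tsize a

theorem tsize_shift (c : ℕ) (A : Ty) : tsize (A.shift c) = tsize A := by
  induction A generalizing c with
  | var n => simp only [Ty.shift]; split <;> rfl
  | imp a b iha ihb => simp [Ty.shift, tsize, ihb c]
  | conj a b iha ihb => simp [Ty.shift, tsize, iha c, ihb c]
  | all a ih => simp [Ty.shift, tsize, ih (c + 1)]

/-- Termination weight of a term. -/
def W : Tm → ℕ
  | .var _ => 1
  | .lam _ M => W M
  | .app M N => W M * (1 + W N)
  | .pair M N => W M + W N
  | .proj1 M => W M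
  | .proj2 M => W M
  | .tlam M => W M
  | .tapp M C => W M * (1 + 2 * tsize C)

theorem W_pos (M : Tm) : 1 ≤ W M := by
  induction M with
  | var _ => exact le_refl 1
  | lam _ M ih => exact ih
  | app M N ihM ihN => exact le_trans ihM (Nat.le_mul_of_pos_right _ (by omega))
  | pair M N ihM ihN => simp [W]; omega
  | proj1 M ih => exact ih
  | proj2 M ih => exact ih
  | tlam M ih => exact ih
  | tapp M C ih => exact le_trans ih (Nat.le_mul_of_pos_right _ (by omega))

theorem W_shiftVar (c : ℕ) (M : Tm) : W (M.shiftVar c) = W M := by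
  induction M generalizing c with
  | var n => simp only [Tm.shiftVar]; split <;> rfl
  | lam A M ih => simp [Tm.shiftVar, W, ih]
  | app M N ihM ihN => simp [Tm.shiftVar, W, ihM, ihN]
  | pair M N ihM ihN => simp [Tm.shiftVar, W, ihM, ihN]
  | proj1 M ih => simp [Tm.shiftVar, W, ih]
  | proj2 M ih => simp [Tm.shiftVar, W, ih]
  | tlam M ih => simp [Tm.shiftVar, W, ih]
  | tapp M B ih => simp [Tm.shiftVar, W, ih]

theorem W_shiftTy (c : ℕ) (M : Tm) : W (M.shiftTy c) = W M := by
  induction M generalizing c with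
  | var n => rfl
  | lam A M ih => simp [Tm.shiftTy, W, ih]
  | app M N ihM ihN => simp [Tm.shiftTy, W, ihM, ihN]
  | pair M N ihM ihN => simp [Tm.shiftTy, W, ihM, ihN]
  | proj1 M ih => simp [Tm.shiftTy, W, ih]
  | proj2 M ih => simp [Tm.shiftTy, W, ih]
  | tlam M ih => simp [Tm.shiftTy, W, ih]
  | tapp M B ih => simp [Tm.shiftTy, W, ih, tsize_shift]

theorem Fine_W_lt {Γ M M'} (h : Fine Γ M M') : W M' < W M := by
  induction h with
  | @rhoHat_imp Γ M C₁ C₂ A P B Q h =>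
      have hM := W_pos M; have hP := W_pos P; have hQ := W_pos Q
      simp only [W, tsize, W_shiftVar]
      have key : (1 + 2 * tsize C₂) * (1 + (W P * (1 + 1) + W Q * (1 + 1)))
          < (1 + 2 * (2 * tsize C₂ ^ 2 + 3 * tsize C₂ + 1)) * (1 + (W P + W Q)) := by
        have e1 : (1 + 2 * tsize C₂) * (1 + (W P * (1 + 1) + W Q * (1 + 1)))
            = 1 + 2 * W P + 2 * W Q + 2 * tsize C₂ + 4 * (tsize C₂ * W P)
              + 4 * (tsize C₂ * W Q) := by ring
        have e2 : (1 + 2 * (2 * tsize C₂ ^ 2 + 3 * tsize C₂ + 1)) * (1 + (W P + W Q))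
            = 3 + 6 * tsize C₂ + 4 * tsize C₂ ^ 2 + 3 * W P + 3 * W Q
              + 6 * (tsize C₂ * W P) + 6 * (tsize C₂ * W Q)
              + 4 * (tsize C₂ ^ 2 * W P) + 4 * (tsize C₂ ^ 2 * W Q) := by ring
        rw [e1, e2]
        omega
      calc W M * (1 + 2 * tsize C₂) * (1 + (W P * (1 + 1) + W Q * (1 + 1)))
          = W M * ((1 + 2 * tsize C₂) * (1 + (W P * (1 + 1) + W Q * (1 + 1)))) := by ring
        _ < W M * ((1 + 2 * (2 * tsize C₂ ^ 2 + 3 * tsize C₂ + 1)) * (1 + (W P + W Q))) :=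
            Nat.mul_lt_mul_of_le_of_lt (le_refl _) key hM
        _ = W M * (1 + 2 * (2 * tsize C₂ ^ 2 + 3 * tsize C₂ + 1)) * (1 + (W P + W Q)) := by
            ring
  | @rhoHat_conj Γ M C₁ C₂ A P B Q h =>
      simp only [W, tsize]
      nlinarith [W_pos M, W_pos P, W_pos Q]
  | @rhoHat_all Γ M D A P B Q h =>
      simp only [W, tsize, W_shiftTy, tsize_shift]
      nlinarith [W_pos M, W_pos P, W_pos Q]
  | @rho_imp Γ M C₁ C₂ h =>
      simp only [W, tsize, W_shiftVar]
      nlinarith [W_pos M, sq_nonneg (tsize C₂)]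
  | @rho_conj Γ M C₁ C₂ h =>
      simp only [W, tsize]
      nlinarith [W_pos M]
  | @rho_all Γ M D h =>
      simp only [W, tsize, W_shiftTy]
      nlinarith [W_pos M]
  | lam _ ih => exact ih
  | app1 _ ih =>
      simp only [W]
      exact Nat.mul_lt_mul_of_lt_of_le ih (le_refl _) (by omega)
  | app2 _ ih =>
      simp only [W]
      exact Nat.mul_lt_mul_of_le_of_lt (le_refl _) (by omega) (W_pos _)
  | pair1 _ ih => simp only [W]; omega
  | pair2 _ ih => simp only [W]; omega
  | proj1 _ ih => exact ih
  | proj2 _ ih => exact ih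
  | tlam _ ih => exact ih
  | tapp _ ih =>
      simp only [W]
      exact Nat.mul_lt_mul_of_lt_of_le ih (le_refl _) (by omega)

/-- Fine termination of atomization: there is no infinite sequence of fine
ϱρ-reductions in `Γ` starting from a term typable in `Γ`. -/
theorem fine_termination (Γ : List Ty) :
    ¬ ∃ f : ℕ → Tm, (∃ A, Typing Γ (f 0) A) ∧ ∀ n, Fine Γ (f n) (f (n + 1)) := by
  rintro ⟨f, -, hstep⟩
  have key : ∀ n, W (f n) + n ≤ W (f 0) := by
    intro n
    induction n with
    | zero => simp
    | succ k ih => have := Fine_W_lt (hstep k); omega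
  have := key (W (f 0) + 1)
  omega
end

section
/- Atomization of the Russell–Prawitz case: for all system F terms M, P, Q, types A, B, C, the term MC⟨λx:A.P, λy:B.Q⟩ ϱ-reduces in finitely many steps (→*_ϱ) to the Fat-case term CASE(M, x:A.P, y:B.Q, C), defined by recursion on C as: CASE(M,x.P,y.Q,X) = MX⟨λx.P,λy.Q⟩; CASE(M,x.P,y.Q,C₁∧C₂) = ⟨CASE(M,x.P1,y.Q1,C₁), CASE(M,x.P2,y.Q2,C₂)⟩; CASE(M,x.P,y.Q,C₁⊃C₂) = λz:C₁.CASE(M,x.Pz,y.Qz,C₂) (z fresh); CASE(M,x.P,y.Q,∀X.C₀) = ΛX.CASE(M,x.PX,y.QX,C₀) (X fresh). In particular, the Fat-case term uses only an atomic universal instantiation MX. -/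
/-- The Fat case-elimination `CASE(M, x:A.P, y:B.Q, C)`, by recursion on `C`,
using only atomic universal instantiations of `M`. -/
def CASE (M : Tm) (A : Ty) (P : Tm) (B : Ty) (Q : Tm) : Ty → Tm
  | .var n => .app (.tapp M (.var n)) (.pair (.lam A P) (.lam B Q))
  | .imp C₁ C₂ =>
      .lam C₁ (CASE (M.shiftVar 0) A (.app (P.shiftVar 1) (.var 1))
        B (.app (Q.shiftVar 1) (.var 1)) C₂)
  | .conj C₁ C₂ =>
      .pair (CASE M A (.proj1 P) B (.proj1 Q) C₁) (CASE M A (.proj2 P) B (.proj2 Q) C₂)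
  | .all C₀ =>
      .tlam (CASE (M.shiftTy 0) (A.shift 0) (.tapp (P.shiftTy 0) (.var 0))
        (B.shift 0) (.tapp (Q.shiftTy 0) (.var 0)) C₀)

namespace Compat

theorem rtg_lam {R} (A) {M N} (h : Relation.ReflTransGen (Compat R) M N) :
    Relation.ReflTransGen (Compat R) (.lam A M) (.lam A N) :=
  Relation.ReflTransGen.lift (fun x => Tm.lam A x) (fun _ _ => Compat.lam A) _ _ h

theorem rtg_tlam {R} {M N} (h : Relation.ReflTransGen (Compat R) M N) :
    Relation.ReflTransGen (Compat R) (.tlam M) (.tlam N) :=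
  Relation.ReflTransGen.lift (fun x => Tm.tlam x) (fun _ _ => Compat.tlam) _ _ h

theorem rtg_pair {R} {M N M' N'} (h1 : Relation.ReflTransGen (Compat R) M M')
    (h2 : Relation.ReflTransGen (Compat R) N N') :
    Relation.ReflTransGen (Compat R) (.pair M N) (.pair M' N') :=
  (Relation.ReflTransGen.lift (fun x => Tm.pair x N) (fun _ _ => Compat.pair1 N) _ _ h1).trans
    (Relation.ReflTransGen.lift (fun x => Tm.pair M' x) (fun _ _ => Compat.pair2 M') _ _ h2)

end Compat

/-- Atomization of the Russell–Prawitz case: `M C ⟨λx:A.P, λy:B.Q⟩` ϱ-reduces in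
finitely many steps to the Fat-case term `CASE(M, x:A.P, y:B.Q, C)`. -/
theorem rp_case_atomizes :
    ∀ (M P Q : Tm) (A B C : Ty),
      Relation.ReflTransGen (Compat RhoHat)
        (Tm.app (Tm.tapp M C) (Tm.pair (Tm.lam A P) (Tm.lam B Q)))
        (CASE M A P B Q C) := by
  intro M P Q A B C
  induction C generalizing M P Q A B with
  | var n => exact Relation.ReflTransGen.refl
  | imp C₁ C₂ _ ih2 =>
      refine Relation.ReflTransGen.head (Compat.root (RhoHat.imp M C₁ C₂ A P B Q)) ?_
      exact Compat.rtg_lam C₁ (ih2 _ _ _ _ _)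
  | conj C₁ C₂ ih1 ih2 =>
      refine Relation.ReflTransGen.head (Compat.root (RhoHat.conj M C₁ C₂ A P B Q)) ?_
      exact Compat.rtg_pair (ih1 _ _ _ _ _) (ih2 _ _ _ _ _)
  | all C₀ ih =>
      refine Relation.ReflTransGen.head (Compat.root (RhoHat.all M C₀ A P B Q)) ?_
      exact Compat.rtg_tlam (ih _ _ _ _ _)
end

section
/- Atomization of the Russell–Prawitz ex falso: for every system F term M and type C, the term MC ρ-reduces in finitely many steps (→*_ρ) to ABORT(M, C), defined by recursion on C as: ABORT(M,X) = MX; ABORT(M,C₁∧C₂) = ⟨ABORT(M,C₁), ABORT(M,C₂)⟩; ABORT(M,B⊃C) = λz:B.ABORT(M,C) (z fresh); ABORT(M,∀X.A) = ΛX.ABORT(M,A) (X fresh). In particular, ABORT(M,C) uses only atomic universal instantiations of M. -/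
/-- The Fat ex-falso `ABORT(M, C)`, by recursion on `C`, using only atomic
universal instantiations of `M`. -/
def ABORT (M : Tm) : Ty → Tm
  | .var n => .tapp M (.var n)
  | .imp C₁ C₂ => .lam C₁ (ABORT (M.shiftVar 0) C₂)
  | .conj C₁ C₂ => .pair (ABORT M C₁) (ABORT M C₂)
  | .all C₀ => .tlam (ABORT (M.shiftTy 0) C₀)

/-- Atomization of the Russell–Prawitz ex falso: `M C` ρ-reduces in finitely many
steps to the Fat term `ABORT(M, C)`. -/
theorem rp_abort_atomizes :
    ∀ (M : Tm) (C : Ty),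
      Relation.ReflTransGen (Compat Rho) (Tm.tapp M C) (ABORT M C) := by
  have hlam : ∀ (A) {M N}, Relation.ReflTransGen (Compat Rho) M N →
      Relation.ReflTransGen (Compat Rho) (Tm.lam A M) (Tm.lam A N) := fun A _ _ h =>
    Relation.ReflTransGen.lift (Tm.lam A) (fun _ _ => Compat.lam A) _ _ h
  have htlam : ∀ {M N}, Relation.ReflTransGen (Compat Rho) M N →
      Relation.ReflTransGen (Compat Rho) (Tm.tlam M) (Tm.tlam N) := fun h =>
    Relation.ReflTransGen.lift Tm.tlam (fun _ _ => Compat.tlam) _ _ h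
  have hpair : ∀ {M N M' N'}, Relation.ReflTransGen (Compat Rho) M M' →
      Relation.ReflTransGen (Compat Rho) N N' →
      Relation.ReflTransGen (Compat Rho) (Tm.pair M N) (Tm.pair M' N') := by
    intro M N M' N' h1 h2
    exact (Relation.ReflTransGen.lift (fun x => Tm.pair x N) (fun _ _ => Compat.pair1 N) _ _ h1).trans
      (Relation.ReflTransGen.lift (fun x => Tm.pair M' x) (fun _ _ => Compat.pair2 M') _ _ h2)
  intro M C
  induction C generalizing M with
  | var n => exact Relation.ReflTransGen.refl
  | imp C₁ C₂ ih1 ih2 =>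
    exact (Relation.ReflTransGen.single (Compat.root (Rho.imp M C₁ C₂))).trans
      (hlam C₁ (ih2 _))
  | conj C₁ C₂ ih1 ih2 =>
    exact (Relation.ReflTransGen.single (Compat.root (Rho.conj M C₁ C₂))).trans
      (hpair (ih1 M) (ih2 M))
  | all C₀ ih =>
    exact (Relation.ReflTransGen.single (Compat.root (Rho.all M C₀))).trans
      (htlam (ih _))
end
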